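/- arXiv:2011.00050 — 3 statements merged into one kernel-verified Lean document; each statement's English description precedes it below -/
import Mathlib

section
/- Fix integers d ≥ 1, C ≥ 1, n ≥ C and a real number λ > 0. For every matrix w ∈ ℝ^{d×C} there exist X ∈ ℝ^{n×d} and y ∈ ℝ^{n×C} such that the matrix XXᵀ + λI ∈ ℝ^{n×n} is invertible and Xᵀ(XXᵀ + λI)⁻¹ y = w. In other words, every linear ridge-regression coefficient matrix in ℝ^{d×C} is realized by some dataset of size n ≥ C. -/
open Matrix

/-! Take `X` to be `wᵀ` padded with zero rows, i.e. `X = P wᵀ` where `P : ℝ^{n×C}` is the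
coordinate inclusion, so that `Pᵀ P = 1` and `Xᵀ P = w`. Since `XXᵀ + λI` is positive definite,
it is invertible, and the labels `y = (XXᵀ + λI) P` give `Xᵀ(XXᵀ + λI)⁻¹ y = Xᵀ P = w`. -/

theorem Matrix.posDef_mul_transpose_add_smul_one {m k : Type*} [Fintype m] [DecidableEq m]
    [Fintype k] (X : Matrix m k ℝ) {lam : ℝ} (hlam : 0 < lam) :
    (X * Xᵀ + lam • (1 : Matrix m m ℝ)).PosDef := by
  refine PosDef.posSemidef_add ?_ ?_
  · simpa using posSemidef_self_mul_conjTranspose X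
  · rw [smul_one_eq_diagonal]
    exact PosDef.diagonal fun _ => hlam

theorem Matrix.transpose_submatrix_one_mul_submatrix_one {R m c : Type*} [Semiring R]
    [Fintype m] [DecidableEq m] [DecidableEq c] {e : c → m} (he : Function.Injective e) :
    ((1 : Matrix m m R).submatrix id e)ᵀ * (1 : Matrix m m R).submatrix id e = 1 := by
  rw [transpose_submatrix, transpose_one, ← submatrix_mul _ _ _ _ _ Function.bijective_id,
    Matrix.one_mul]
  exact submatrix_one e he

theorem ridge_regression_realizes_every_coefficient_matrix_general
    (d C n : ℕ) (hn : C ≤ n)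
    (lam : ℝ) (hlam : 0 < lam) (w : Matrix (Fin d) (Fin C) ℝ) :
    ∃ (X : Matrix (Fin n) (Fin d) ℝ) (y : Matrix (Fin n) (Fin C) ℝ),
      IsUnit (X * Xᵀ + lam • (1 : Matrix (Fin n) (Fin n) ℝ)) ∧
      Xᵀ * (X * Xᵀ + lam • (1 : Matrix (Fin n) (Fin n) ℝ))⁻¹ * y = w := by
  set P : Matrix (Fin n) (Fin C) ℝ := (1 : Matrix (Fin n) (Fin n) ℝ).submatrix id (Fin.castLE hn)
  have hP : Pᵀ * P = 1 := transpose_submatrix_one_mul_submatrix_one (Fin.castLE_injective hn)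
  set X := P * wᵀ
  set M := X * Xᵀ + lam • (1 : Matrix (Fin n) (Fin n) ℝ)
  have hM : IsUnit M := (posDef_mul_transpose_add_smul_one X hlam).isUnit
  refine ⟨X, M * P, hM, ?_⟩
  rw [Matrix.mul_assoc, nonsing_inv_mul_cancel_left _ _ ((isUnit_iff_isUnit_det M).mp hM),
    transpose_mul, transpose_transpose, Matrix.mul_assoc, hP, Matrix.mul_one]

/-- Every linear ridge-regression coefficient matrix `w ∈ ℝ^{d×C}` is realized
as `Xᵀ(XXᵀ + λI)⁻¹ y` by some dataset `(X, y)` of size `n ≥ C`. -/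
theorem ridge_regression_realizes_every_coefficient_matrix
    (d C n : ℕ) (hd : 1 ≤ d) (hC : 1 ≤ C) (hn : C ≤ n)
    (lam : ℝ) (hlam : 0 < lam) (w : Matrix (Fin d) (Fin C) ℝ) :
    ∃ (X : Matrix (Fin n) (Fin d) ℝ) (y : Matrix (Fin n) (Fin C) ℝ),
      IsUnit (X * Xᵀ + lam • (1 : Matrix (Fin n) (Fin n) ℝ)) ∧
      Xᵀ * (X * Xᵀ + lam • (1 : Matrix (Fin n) (Fin n) ℝ))⁻¹ * y = w :=
  ridge_regression_realizes_every_coefficient_matrix_general d C n hn lam hlam w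
end

section
/- Let d, C, n_s, n_t ≥ 1 with X_t ∈ ℝ^{n_t×d} of rank d and X_s ∈ ℝ^{n_s×d} of rank d (so X_tᵀX_t and X_sᵀX_s are invertible), and let y_t ∈ ℝ^{n_t×C}. Set w₀ = (X_tᵀX_t)⁻¹X_tᵀ y_t (the unique least-squares classifier for (X_t, y_t)) and define the label-solve map L(y) = (1/2)‖y_t − X_t(X_sᵀX_s)⁻¹X_sᵀ y‖²_F for y ∈ ℝ^{n_s×C}. Then y* := X_s w₀ is a minimizer of L, and every minimizer y ≠ y* of L satisfies ‖y‖_F > ‖y*‖_F; that is, y* is the unique minimum-norm minimizer, and it coincides with the predictions of the least-squares classifier of (X_t, y_t) evaluated on the support points X_s. -/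
/-! The loss at `y` only sees `w = (X_sᵀX_s)⁻¹X_sᵀ y`, and the normal equations for `w₀` split it as
`½‖y_t − X_t w₀‖² + ½‖X_t (w₀ − w)‖²`. Hence `X_s w₀` is a minimizer (the left inverse returns `w₀`),
and any minimizer `y` has `w = w₀` since `X_t` is injective. The normal equations for `X_s` then
make `y − X_s w₀` orthogonal to `X_s w₀`, and Pythagoras gives `‖y‖² = ‖X_s w₀‖² + ‖y − X_s w₀‖²`. -/

open Matrix

/-- The squared Frobenius norm of a real matrix. -/
noncomputable def froSq {m n : Type*} [Fintype m] [Fintype n]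
    (M : Matrix m n ℝ) : ℝ :=
  ∑ i, ∑ j, (M i j) ^ 2

/-- The Frobenius norm of a real matrix. -/
noncomputable def froNorm {m n : Type*} [Fintype m] [Fintype n]
    (M : Matrix m n ℝ) : ℝ :=
  Real.sqrt (froSq M)

section Frobenius

variable {m n : Type*} [Fintype m] [Fintype n]

lemma froSq_eq_trace (M : Matrix m n ℝ) : froSq M = (Mᵀ * M).trace := by
  simp only [froSq, trace, diag, mul_apply, transpose_apply, sq]
  exact Finset.sum_comm

lemma froSq_nonneg (M : Matrix m n ℝ) : 0 ≤ froSq M := by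
  unfold froSq
  positivity

lemma froSq_eq_zero_iff {M : Matrix m n ℝ} : froSq M = 0 ↔ M = 0 := by
  rw [froSq_eq_trace, ← conjTranspose_eq_transpose_of_trivial,
    trace_conjTranspose_mul_self_eq_zero_iff]

lemma froSq_pos {M : Matrix m n ℝ} (hM : M ≠ 0) : 0 < froSq M :=
  (froSq_nonneg M).lt_of_ne (Ne.symm (froSq_eq_zero_iff.not.mpr hM))

lemma froSq_add_of_transpose_mul_eq_zero {A B : Matrix m n ℝ} (h : Aᵀ * B = 0) :
    froSq (A + B) = froSq A + froSq B := by
  have h' : Bᵀ * A = 0 := by rw [← transpose_transpose (Bᵀ * A), transpose_mul,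
    transpose_transpose, h, transpose_zero]
  simp only [froSq_eq_trace, transpose_add, Matrix.add_mul, Matrix.mul_add, h, h', trace_add,
    trace_zero]
  ring

end Frobenius

lemma isUnit_of_rank_eq_card {K n : Type*} [Field K] [Fintype n] [DecidableEq n]
    {M : Matrix n n K} (h : M.rank = Fintype.card n) : IsUnit M := by
  rw [← mulVec_surjective_iff_isUnit, ← coe_mulVecLin, ← LinearMap.range_eq_top]
  apply Submodule.eq_top_of_finrank_eq
  rw [← rank, h, Module.finrank_fintype_fun_eq_card]

section LeastSquares

variable {m n p : Type*} [Fintype m] [Fintype n] [DecidableEq n]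

/-- Only meaningful when `Xᵀ * X` is invertible (full column rank), where `(Xᵀ * X)⁻¹ * Xᵀ` is the
Moore–Penrose pseudoinverse; otherwise `⁻¹` returns the junk value `0`. -/
noncomputable def leastSquares (X : Matrix m n ℝ) (y : Matrix m p ℝ) : Matrix n p ℝ :=
  (Xᵀ * X)⁻¹ * Xᵀ * y

lemma isUnit_det_transpose_mul_self {X : Matrix m n ℝ} (hX : X.rank = Fintype.card n) :
    IsUnit (Xᵀ * X).det :=
  (isUnit_iff_isUnit_det _).mp (isUnit_of_rank_eq_card (by rw [rank_transpose_mul_self, hX]))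

variable {X : Matrix m n ℝ} (hX : IsUnit (Xᵀ * X).det)
include hX

lemma leastSquares_mul_cancel (w : Matrix n p ℝ) : leastSquares X (X * w) = w := by
  rw [leastSquares, Matrix.mul_assoc, ← Matrix.mul_assoc Xᵀ]
  exact nonsing_inv_mul_cancel_left _ _ hX

lemma transpose_mul_sub_mul_leastSquares (y : Matrix m p ℝ) :
    Xᵀ * (y - X * leastSquares X y) = 0 := by
  rw [leastSquares, Matrix.mul_sub, ← Matrix.mul_assoc, Matrix.mul_assoc _ Xᵀ,
    mul_nonsing_inv_cancel_left _ _ hX, sub_self]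

lemma froSq_sub_mul [Fintype p] (y : Matrix m p ℝ) (w : Matrix n p ℝ) :
    froSq (y - X * w) = froSq (y - X * leastSquares X y) + froSq (X * (leastSquares X y - w)) := by
  set r := y - X * leastSquares X y
  have hsplit : y - X * w = r + X * (leastSquares X y - w) := by
    rw [Matrix.mul_sub, sub_add_sub_cancel]
  have hr : rᵀ * X = (Xᵀ * r)ᵀ := by rw [transpose_mul, transpose_transpose]
  apply hsplit ▸ froSq_add_of_transpose_mul_eq_zero
  rw [← Matrix.mul_assoc, hr, transpose_mul_sub_mul_leastSquares hX, transpose_zero,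
    Matrix.zero_mul]

lemma froSq_eq_froSq_mul_leastSquares_add [Fintype p] (y : Matrix m p ℝ) :
    froSq y = froSq (X * leastSquares X y) + froSq (y - X * leastSquares X y) := by
  simpa [add_comm] using froSq_sub_mul hX y 0

lemma froSq_mul_eq_zero_iff [Fintype p] {v : Matrix n p ℝ} : froSq (X * v) = 0 ↔ v = 0 := by
  refine froSq_eq_zero_iff.trans ⟨fun h => ?_, fun h => h ▸ Matrix.mul_zero X⟩
  rw [← leastSquares_mul_cancel hX v, h, leastSquares, Matrix.mul_zero]

end LeastSquares

theorem label_solve_full_rank_minimum_norm_solution_general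
    (d C ns nt : ℕ)
    (Xt : Matrix (Fin nt) (Fin d) ℝ) (Xs : Matrix (Fin ns) (Fin d) ℝ)
    (yt : Matrix (Fin nt) (Fin C) ℝ)
    (hXt : Xt.rank = d) (hXs : Xs.rank = d)
    (w0 : Matrix (Fin d) (Fin C) ℝ) (hw0 : w0 = (Xtᵀ * Xt)⁻¹ * Xtᵀ * yt)
    (L : Matrix (Fin ns) (Fin C) ℝ → ℝ)
    (hL : ∀ y, L y = (1 / 2) * froSq (yt - Xt * ((Xsᵀ * Xs)⁻¹ * Xsᵀ * y))) :
    (∀ y, L (Xs * w0) ≤ L y) ∧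
    (∀ y, (∀ y', L y ≤ L y') → y ≠ Xs * w0 → froNorm (Xs * w0) < froNorm y) := by
  have ht := isUnit_det_transpose_mul_self (X := Xt) (by rwa [Fintype.card_fin])
  have hs := isUnit_det_transpose_mul_self (X := Xs) (by rwa [Fintype.card_fin])
  change w0 = leastSquares Xt yt at hw0
  change ∀ y, L y = (1 / 2) * froSq (yt - Xt * leastSquares Xs y) at hL
  have hL_split : ∀ y, L y = (1 / 2) *
      (froSq (yt - Xt * w0) + froSq (Xt * (w0 - leastSquares Xs y))) := fun y => by
    rw [hL, hw0, ← froSq_sub_mul ht]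
  have hL_star : L (Xs * w0) = (1 / 2) * froSq (yt - Xt * w0) := by
    rw [hL_split, leastSquares_mul_cancel hs, sub_self, Matrix.mul_zero, froSq_eq_zero_iff.mpr rfl,
      add_zero]
  refine ⟨fun y => ?_, fun y hmin hne => ?_⟩
  · rw [hL_star, hL_split]
    linarith [froSq_nonneg (Xt * (w0 - leastSquares Xs y))]
  · have hy : leastSquares Xs y = w0 := by
      have hle := hmin (Xs * w0)
      rw [hL_star, hL_split] at hle
      have hzero : froSq (Xt * (w0 - leastSquares Xs y)) = 0 :=
        le_antisymm (by linarith) (froSq_nonneg _)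
      exact (sub_eq_zero.mp ((froSq_mul_eq_zero_iff ht).mp hzero)).symm
    have hsplit := froSq_eq_froSq_mul_leastSquares_add hs y
    rw [hy] at hsplit
    exact Real.sqrt_lt_sqrt (froSq_nonneg _)
      (by linarith [froSq_pos (sub_ne_zero.mpr hne)])

/-- For full-column-rank `X_t` and `X_s`, with `w₀ = (X_tᵀX_t)⁻¹X_tᵀy_t` the
least-squares classifier of the target data, the labels `y* = X_s w₀` minimize the label-solve
loss `L(y) = (1/2)‖y_t − X_t(X_sᵀX_s)⁻¹X_sᵀ y‖²_F`, and every other minimizer has strictly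
larger Frobenius norm: `y*` is the unique minimum-norm minimizer. -/
theorem label_solve_full_rank_minimum_norm_solution
    (d C ns nt : ℕ) (hd : 1 ≤ d) (hC : 1 ≤ C)
    (Xt : Matrix (Fin nt) (Fin d) ℝ) (Xs : Matrix (Fin ns) (Fin d) ℝ)
    (yt : Matrix (Fin nt) (Fin C) ℝ)
    (hXt : Xt.rank = d) (hXs : Xs.rank = d)
    (w0 : Matrix (Fin d) (Fin C) ℝ) (hw0 : w0 = (Xtᵀ * Xt)⁻¹ * Xtᵀ * yt)
    (L : Matrix (Fin ns) (Fin C) ℝ → ℝ)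
    (hL : ∀ y, L y = (1 / 2) * froSq (yt - Xt * ((Xsᵀ * Xs)⁻¹ * Xsᵀ * y))) :
    (∀ y, L (Xs * w0) ≤ L y) ∧
    (∀ y, (∀ y', L y ≤ L y') → y ≠ Xs * w0 → froNorm (Xs * w0) < froNorm y) :=
  label_solve_full_rank_minimum_norm_solution_general d C ns nt Xt Xs yt hXt hXs w0 hw0 L hL
end

section
/- Let K : ℝ^d × ℝ^d → ℝ be a symmetric positive semidefinite kernel, λ > 0, and fix a target dataset X_t ∈ ℝ^{n_t×d}, y_t ∈ ℝ^{n_t×C}, and a support size n_s ≥ 1. Let 𝒮 be the family of subspaces of ℝ^{n_t} of the form {column space of K_{X_tX_s} : X_s ∈ ℝ^{n_s×d}}. Then the infimum over all (X_s, y_s) ∈ ℝ^{n_s×d} × ℝ^{n_s×C} of the loss (1/2)‖y_t − K_{X_tX_s}(K_{X_sX_s} + λI)⁻¹ y_s‖²_F equals inf_{S ∈ 𝒮} (1/2)‖Π⊥_S y_t‖²_F, where Π⊥_S is the orthogonal projection of ℝ^{n_t} onto the orthogonal complement of S, applied to each of the C columns of y_t. -/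
open Matrix

/-!
For a fixed support input `X_s`, the matrix `K_{X_sX_s} + λI` is positive definite, hence
invertible, so `y_s ↦ (K_{X_sX_s} + λI)⁻¹ y_s` is onto and the predictions `K_{X_tX_s} B` range
over all matrices whose columns lie in `S = col K_{X_tX_s}`. Column by column, the closest point
of `S` to a column `v` of `y_t` is its orthogonal projection onto `S`, at distance `‖Π⊥_S v‖`.
So the inner infimum over `y_s` is attained and equals `(1/2)‖Π⊥_S y_t‖²_F`, and the two outer
infima over `X_s` agree.
-/

theorem sInf_exists_exists_eq_sInf_exists_of_le_of_attained
    {α β γ : Type*} [ConditionallyCompleteLattice γ] [Nonempty α]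
    {f : α → β → γ} {g : α → γ} (hg : BddBelow (Set.range g))
    (hle : ∀ a b, g a ≤ f a b) (hattained : ∀ a, ∃ b, f a b = g a) :
    sInf {r | ∃ a b, f a b = r} = sInf {r | ∃ a, g a = r} := by
  obtain ⟨m, hm⟩ := hg
  have hf : BddBelow {r | ∃ a b, f a b = r} := by
    refine ⟨m, ?_⟩
    rintro _ ⟨a, b, rfl⟩
    exact (hm ⟨a, rfl⟩).trans (hle a b)
  obtain ⟨a₀⟩ := ‹Nonempty α›
  obtain ⟨b₀, -⟩ := hattained a₀
  apply le_antisymm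
  · refine le_csInf ⟨g a₀, a₀, rfl⟩ ?_
    rintro _ ⟨a, rfl⟩
    obtain ⟨b, hb⟩ := hattained a
    exact csInf_le hf ⟨a, b, hb⟩
  · refine le_csInf ⟨f a₀ b₀, a₀, b₀, rfl⟩ ?_
    rintro _ ⟨a, b, rfl⟩
    exact (csInf_le ⟨m, hm⟩ ⟨a, rfl⟩).trans (hle a b)

theorem Submodule.norm_orthogonalProjectionOnto_orthogonal_le
    {𝕜 E : Type*} [RCLike 𝕜] [NormedAddCommGroup E] [InnerProductSpace 𝕜 E]
    (U : Submodule 𝕜 E) [U.HasOrthogonalProjection] (v : E) {w : E} (hw : w ∈ U) :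
    ‖(Uᗮ.orthogonalProjectionOnto v : E)‖ ≤ ‖v - w‖ := by
  have hmin : ‖v - U.starProjection v‖ ≤ ‖v - w‖ := by
    rw [starProjection_minimal]
    exact ciInf_le ⟨0, by rintro _ ⟨x, rfl⟩; positivity⟩ (⟨w, hw⟩ : U)
  rwa [← starProjection_apply, starProjection_orthogonal_val]

section Columns

variable {m n ι : Type*}

noncomputable def colVec (M : Matrix m ι ℝ) (c : ι) : EuclideanSpace ℝ m :=
  (EuclideanSpace.equiv m ℝ).symm (fun i => M i c)

theorem froSq_eq_sum_norm_sq_colVec [Fintype m] [Fintype ι] (M : Matrix m ι ℝ) :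
    froSq M = ∑ c, ‖colVec M c‖ ^ 2 := by
  rw [froSq, Finset.sum_comm]
  refine Finset.sum_congr rfl fun c _ => ?_
  rw [EuclideanSpace.norm_eq, Real.sq_sqrt (by positivity)]
  simp [colVec]

variable [Fintype n] [DecidableEq n]

theorem colVec_sub_mul (Y : Matrix m ι ℝ) (A : Matrix m n ℝ) (B : Matrix n ι ℝ) (c : ι) :
    colVec (Y - A * B) c = colVec Y c - toEuclideanLin A (colVec B c) := by
  ext i
  simp [colVec, mulVec, mul_apply, dotProduct]

theorem sum_norm_sq_orthogonalProjectionOnto_le_froSq_sub_mul [Fintype m] [Fintype ι]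
    (Y : Matrix m ι ℝ) (A : Matrix m n ℝ) (B : Matrix n ι ℝ) :
    ∑ c, ‖((LinearMap.range (toEuclideanLin A))ᗮ.orthogonalProjectionOnto (colVec Y c) :
        EuclideanSpace ℝ m)‖ ^ 2 ≤ froSq (Y - A * B) := by
  rw [froSq_eq_sum_norm_sq_colVec]
  gcongr with c
  rw [colVec_sub_mul]
  exact Submodule.norm_orthogonalProjectionOnto_orthogonal_le _ _ ⟨_, rfl⟩

theorem exists_froSq_sub_mul_eq_sum_norm_sq_orthogonalProjectionOnto [Fintype m] [Fintype ι]
    (Y : Matrix m ι ℝ) (A : Matrix m n ℝ) :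
    ∃ B : Matrix n ι ℝ, froSq (Y - A * B) =
      ∑ c, ‖((LinearMap.range (toEuclideanLin A))ᗮ.orthogonalProjectionOnto (colVec Y c) :
        EuclideanSpace ℝ m)‖ ^ 2 := by
  choose z hz using fun c =>
    ((LinearMap.range (toEuclideanLin A)).orthogonalProjectionOnto (colVec Y c)).2
  refine ⟨Matrix.of fun j c => z c j, ?_⟩
  rw [froSq_eq_sum_norm_sq_colVec]
  refine Finset.sum_congr rfl fun c _ => ?_
  rw [colVec_sub_mul, ← Submodule.starProjection_apply, Submodule.starProjection_orthogonal_val,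
    Submodule.starProjection_apply, ← hz c]
  rfl

end Columns

theorem kip_optimal_loss_eq_inf_orthogonal_projection_general
    (d C ns nt : ℕ)
    (K : (Fin d → ℝ) → (Fin d → ℝ) → ℝ)
    (hK : ∀ (m : ℕ) (x : Fin m → Fin d → ℝ),
      (Matrix.of fun i j => K (x i) (x j) : Matrix (Fin m) (Fin m) ℝ).PosSemidef)
    (lam : ℝ) (hlam : 0 < lam)
    (yt : Matrix (Fin nt) (Fin C) ℝ)
    (Kts : Matrix (Fin ns) (Fin d) ℝ → Matrix (Fin nt) (Fin ns) ℝ)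
    (Kss : Matrix (Fin ns) (Fin d) ℝ → Matrix (Fin ns) (Fin ns) ℝ)
    (hKss : ∀ Xs, Kss Xs = Matrix.of fun i j => K (Xs i) (Xs j))
    (S : Matrix (Fin ns) (Fin d) ℝ → Submodule ℝ (EuclideanSpace ℝ (Fin nt)))
    (hS : ∀ Xs, S Xs = LinearMap.range (Matrix.toEuclideanLin (Kts Xs))) :
    sInf {r : ℝ | ∃ (Xs : Matrix (Fin ns) (Fin d) ℝ) (ys : Matrix (Fin ns) (Fin C) ℝ),
        (1 / 2) * froSq
          (yt - Kts Xs * (Kss Xs + lam • (1 : Matrix (Fin ns) (Fin ns) ℝ))⁻¹ * ys) = r} =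
    sInf {r : ℝ | ∃ Xs : Matrix (Fin ns) (Fin d) ℝ,
        (1 / 2) * ∑ c : Fin C,
          ‖(Submodule.orthogonalProjectionOnto (S Xs)ᗮ
              ((EuclideanSpace.equiv (Fin nt) ℝ).symm (fun i => yt i c)) :
            EuclideanSpace ℝ (Fin nt))‖ ^ 2 = r} := by
  have hunit : ∀ Xs, IsUnit (Kss Xs + lam • (1 : Matrix (Fin ns) (Fin ns) ℝ)).det := by
    intro Xs
    have hpsd : (Kss Xs).PosSemidef := by rw [hKss]; exact hK ns Xs
    exact (PosDef.posSemidef_add hpsd (PosDef.one.smul hlam)).det_pos.ne'.isUnit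
  refine sInf_exists_exists_eq_sInf_exists_of_le_of_attained ⟨0, ?_⟩ (fun Xs ys => ?_)
    (fun Xs => ?_)
  · rintro _ ⟨Xs, rfl⟩
    positivity
  · rw [hS, Matrix.mul_assoc]
    gcongr
    exact sum_norm_sq_orthogonalProjectionOnto_le_froSq_sub_mul yt _ _
  · obtain ⟨B, hB⟩ := exists_froSq_sub_mul_eq_sum_norm_sq_orthogonalProjectionOnto yt (Kts Xs)
    refine ⟨(Kss Xs + lam • 1) * B, ?_⟩
    rw [Matrix.mul_assoc, nonsing_inv_mul_cancel_left _ _ (hunit Xs), hB, hS]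
    rfl

/-- For a symmetric positive semidefinite kernel `K`, the infimum of the KIP
loss over all support sets `(X_s, y_s)` equals the infimum, over subspaces `S` of `ℝ^{n_t}`
arising as column spaces of target-support kernel matrices `K_{X_tX_s}`, of
`(1/2)‖Π⊥_S y_t‖²_F` (orthogonal projection onto `Sᗮ`, applied columnwise). -/
theorem kip_optimal_loss_eq_inf_orthogonal_projection
    (d C ns nt : ℕ) (hns : 1 ≤ ns)
    (K : (Fin d → ℝ) → (Fin d → ℝ) → ℝ)
    (hK : ∀ (m : ℕ) (x : Fin m → Fin d → ℝ),
      (Matrix.of fun i j => K (x i) (x j) : Matrix (Fin m) (Fin m) ℝ).PosSemidef)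
    (lam : ℝ) (hlam : 0 < lam)
    (Xt : Matrix (Fin nt) (Fin d) ℝ) (yt : Matrix (Fin nt) (Fin C) ℝ)
    (Kts : Matrix (Fin ns) (Fin d) ℝ → Matrix (Fin nt) (Fin ns) ℝ)
    (hKts : ∀ Xs, Kts Xs = Matrix.of fun i j => K (Xt i) (Xs j))
    (Kss : Matrix (Fin ns) (Fin d) ℝ → Matrix (Fin ns) (Fin ns) ℝ)
    (hKss : ∀ Xs, Kss Xs = Matrix.of fun i j => K (Xs i) (Xs j))
    (S : Matrix (Fin ns) (Fin d) ℝ → Submodule ℝ (EuclideanSpace ℝ (Fin nt)))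
    (hS : ∀ Xs, S Xs = LinearMap.range (Matrix.toEuclideanLin (Kts Xs))) :
    sInf {r : ℝ | ∃ (Xs : Matrix (Fin ns) (Fin d) ℝ) (ys : Matrix (Fin ns) (Fin C) ℝ),
        (1 / 2) * froSq
          (yt - Kts Xs * (Kss Xs + lam • (1 : Matrix (Fin ns) (Fin ns) ℝ))⁻¹ * ys) = r} =
    sInf {r : ℝ | ∃ Xs : Matrix (Fin ns) (Fin d) ℝ,
        (1 / 2) * ∑ c : Fin C,
          ‖(Submodule.orthogonalProjectionOnto (S Xs)ᗮ
              ((EuclideanSpace.equiv (Fin nt) ℝ).symm (fun i => yt i c)) :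
            EuclideanSpace ℝ (Fin nt))‖ ^ 2 = r} :=
  kip_optimal_loss_eq_inf_orthogonal_projection_general d C ns nt K hK lam hlam yt Kts Kss hKss S hS
end
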